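/- (Remark 1, necessary condition on batch size — explicit form.) Equip ℝⁿ with the ℓ1 norm. Let 0 < α ≤ β, let 2 ≤ b, and let M ⊂ ℝⁿ be a finite set with |M| = 2b − 1 such that every subset S ⊆ M with |S| = b is α-β-connected. Then b ≤ (2β/α + 1)ⁿ − 1. -/
import Mathlib


/-- The ℓ1 norm on `ℝⁿ`. -/
def l1norm (n : ℕ) (x : Fin n → ℝ) : ℝ := ∑ i, |x i|

/-- `S` is α-β-connected (w.r.t. the ℓ1 norm on `ℝⁿ`):
(i) `α` is the minimum of the pairwise distances of `S`, and
(ii) `β` is the minimum of all `r ≥ 0` such that the graph on `S` joining two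
distinct points exactly when their distance is `≤ r` is connected. -/
def ABConnected (n : ℕ) (α β : ℝ) (S : Finset (Fin n → ℝ)) : Prop :=
  IsLeast {d : ℝ | ∃ x ∈ S, ∃ y ∈ S, x ≠ y ∧ l1norm n (x - y) = d} α ∧
  IsLeast {r : ℝ | 0 ≤ r ∧
    (SimpleGraph.fromRel
      (fun a b : {x // x ∈ S} => l1norm n (a.1 - b.1) ≤ r)).Connected} β

open MeasureTheory
open scoped ENNReal Pointwise

lemma l1norm_nonneg' (n : ℕ) (x : Fin n → ℝ) : 0 ≤ l1norm n x :=
  Finset.sum_nonneg fun _ _ => abs_nonneg _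

lemma l1norm_zero' (n : ℕ) : l1norm n 0 = 0 := by simp [l1norm]

lemma l1norm_sub_comm (n : ℕ) (x y : Fin n → ℝ) :
    l1norm n (x - y) = l1norm n (y - x) := by
  unfold l1norm
  refine Finset.sum_congr rfl fun i _ => ?_
  simp [Pi.sub_apply, abs_sub_comm]

lemma l1norm_triangle (n : ℕ) (x y z : Fin n → ℝ) :
    l1norm n (x - z) ≤ l1norm n (x - y) + l1norm n (y - z) := by
  unfold l1norm
  rw [← Finset.sum_add_distrib]
  refine Finset.sum_le_sum fun i _ => ?_
  simpa [Pi.sub_apply] using abs_sub_le (x i) (y i) (z i)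

lemma l1norm_smul' (n : ℕ) (r : ℝ) (x : Fin n → ℝ) :
    l1norm n (r • x) = |r| * l1norm n x := by
  unfold l1norm
  rw [Finset.mul_sum]
  refine Finset.sum_congr rfl fun i _ => ?_
  simp [abs_mul]

/-- The open ℓ1 ball. -/
def l1ball (n : ℕ) (c : Fin n → ℝ) (r : ℝ) : Set (Fin n → ℝ) :=
  {x | l1norm n (x - c) < r}

lemma l1ball_isOpen (n : ℕ) (c : Fin n → ℝ) (r : ℝ) : IsOpen (l1ball n c r) := by
  have hc : Continuous (fun x : Fin n → ℝ => l1norm n (x - c)) := by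
    unfold l1norm
    exact continuous_finset_sum _ fun i _ =>
      ((continuous_apply i).sub continuous_const).abs
  exact isOpen_lt hc continuous_const

lemma l1ball_eq (n : ℕ) (c : Fin n → ℝ) {r : ℝ} (hr : 0 < r) :
    l1ball n c r = c +ᵥ (r • l1ball n (0 : Fin n → ℝ) 1) := by
  ext x
  rw [Set.mem_vadd_set_iff_neg_vadd_mem,
    Set.mem_smul_set_iff_inv_smul_mem₀ (ne_of_gt hr)]
  have h1 : (-c) +ᵥ x = x - c := by
    simp [vadd_eq_add, sub_eq_add_neg, add_comm]
  rw [h1]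
  simp only [l1ball, Set.mem_setOf_eq, sub_zero]
  rw [l1norm_smul', abs_inv, abs_of_pos hr]
  rw [inv_mul_lt_iff₀ hr, mul_one]

lemma l1ball_volume (n : ℕ) (c : Fin n → ℝ) {r : ℝ} (hr : 0 < r) :
    volume (l1ball n c r)
      = ENNReal.ofReal (r ^ n) * volume (l1ball n (0 : Fin n → ℝ) 1) := by
  rw [l1ball_eq n c hr, measure_vadd, Measure.addHaar_smul]
  congr 2
  rw [abs_of_nonneg (by positivity)]
  congr 1
  simp

/-- Remark 1, explicit form: in `(ℝⁿ, ‖·‖₁)`, if every `b`-sized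
subset of `M` (`|M| = 2b − 1`, `b ≥ 2`) is α-β-connected (`0 < α ≤ β`), then
`b ≤ (2β/α + 1)ⁿ − 1`. -/
theorem batch_size_explicit_bound
    (n : ℕ) (b : ℕ) (hb : 2 ≤ b)
    (α β : ℝ) (hα : 0 < α) (hαβ : α ≤ β)
    (M : Finset (Fin n → ℝ)) (hM : M.card = 2 * b - 1)
    (hconn : ∀ S ⊆ M, S.card = b → ABConnected n α β S) :
    (b : ℝ) ≤ (2 * β / α + 1) ^ n - 1 := by
  classical
  have hβ : 0 ≤ β := le_trans hα.le hαβ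
  -- all pairwise distances in M are ≥ α
  have hdist : ∀ y ∈ M, ∀ z ∈ M, y ≠ z → α ≤ l1norm n (y - z) := by
    intro y hy z hz hyz
    have hsub : ({y, z} : Finset (Fin n → ℝ)) ⊆ M := by
      intro a ha
      rcases Finset.mem_insert.1 ha with h | h
      · exact h ▸ hy
      · exact (Finset.mem_singleton.1 h) ▸ hz
    have hcard2 : ({y, z} : Finset (Fin n → ℝ)).card = 2 := Finset.card_pair hyz
    obtain ⟨S, hS1, hS2, hS3⟩ := Finset.exists_subsuperset_card_eq (n := b) hsub
      (by rw [hcard2]; omega) (by rw [hM]; omega)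
    have := (hconn S hS2 hS3).1.2
    exact this ⟨y, hS1 (by simp), z, hS1 (by simp), hyz, rfl⟩
  -- pick a point x ∈ M
  have hMne : M.Nonempty := Finset.card_pos.1 (by omega)
  obtain ⟨x, hx⟩ := hMne
  set P : Finset (Fin n → ℝ) := M.filter (fun y => l1norm n (y - x) ≤ β) with hP
  set Q : Finset (Fin n → ℝ) := M.filter (fun y => ¬ l1norm n (y - x) ≤ β) with hQ
  -- the far set Q is small
  have hQcard : Q.card ≤ b - 2 := by
    by_contra hcon
    push_neg at hcon
    obtain ⟨T, hTQ, hTcard⟩ := Finset.exists_subset_card_eq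
      (show b - 1 ≤ Q.card by omega)
    have hxT : x ∉ T := by
      intro hxt
      have := (Finset.mem_filter.1 (hTQ hxt)).2
      simp [sub_self, l1norm_zero'] at this
      linarith
    set S : Finset (Fin n → ℝ) := insert x T with hS
    have hScard : S.card = b := by
      rw [hS, Finset.card_insert_of_notMem hxT, hTcard]; omega
    have hSM : S ⊆ M := by
      rw [hS]
      exact Finset.insert_subset hx (hTQ.trans (Finset.filter_subset _ _))
    have hconnS := (hconn S hSM hScard).2.1.2
    -- find a point t ∈ T
    have hTne : T.Nonempty := Finset.card_pos.1 (by omega)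
    obtain ⟨t, ht⟩ := hTne
    have hxS : x ∈ S := Finset.mem_insert_self _ _
    have htS : t ∈ S := Finset.mem_insert_of_mem ht
    have hne : (⟨x, hxS⟩ : {w // w ∈ S}) ≠ ⟨t, htS⟩ := by
      intro h
      have hxt : x = t := congrArg Subtype.val h
      exact hxT (by rw [hxt]; exact ht)
    obtain ⟨p⟩ := hconnS.preconnected ⟨x, hxS⟩ ⟨t, htS⟩
    cases p with
    | nil => exact hne rfl
    | @cons _ z _ h p' =>
      rw [SimpleGraph.fromRel_adj] at h
      obtain ⟨hzx, hor⟩ := h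
      have hz1 : z.1 ≠ x := by
        intro hzx1
        apply hzx
        exact Subtype.ext (by rw [hzx1])
      have hzT : z.1 ∈ T := by
        rcases Finset.mem_insert.1 z.2 with h | h
        · exact absurd h hz1
        · exact h
      have hzfar : ¬ l1norm n (z.1 - x) ≤ β := (Finset.mem_filter.1 (hTQ hzT)).2
      apply hzfar
      rcases hor with h | h
      · rw [l1norm_sub_comm] at h; exact h
      · exact h
  -- the near set P has at least b+1 points
  have hPQ : P.card + Q.card = M.card :=
    Finset.card_filter_add_card_filter_not _
  have hPcard : b + 1 ≤ P.card := by omega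
  -- volume packing
  set V := volume (l1ball n (0 : Fin n → ℝ) 1) with hV
  have hVpos : 0 < V :=
    (l1ball_isOpen n 0 1).measure_pos volume
      ⟨0, by simp [l1ball, sub_self, l1norm_zero']⟩
  have hVlt : V < ⊤ := by
    have hsub : l1ball n (0 : Fin n → ℝ) 1 ⊆
        Set.univ.pi (fun _ : Fin n => Set.Ioo (-1 : ℝ) 1) := by
      intro w hw
      have hw' : l1norm n w < 1 := by simpa [l1ball] using hw
      intro i _
      have : |w i| ≤ l1norm n w :=
        Finset.single_le_sum (fun j _ => abs_nonneg (w j)) (Finset.mem_univ i)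
      exact Set.mem_Ioo.2 (abs_lt.1 (lt_of_le_of_lt this hw'))
    calc V ≤ volume (Set.univ.pi (fun _ : Fin n => Set.Ioo (-1 : ℝ) 1)) :=
            measure_mono hsub
      _ = ∏ _i : Fin n, volume (Set.Ioo (-1 : ℝ) 1) := volume_pi_pi _
      _ < ⊤ := by
            simp [Real.volume_Ioo]
  set r : ℝ := α / 2 with hr
  have hrpos : 0 < r := by positivity
  -- the balls around points of P are pairwise disjoint
  have hdisj : (↑P : Set (Fin n → ℝ)).PairwiseDisjoint
      (fun z => l1ball n z r) := by
    intro z hz z' hz' hzz'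
    refine Set.disjoint_left.2 fun w hw hw' => ?_
    have h1 : l1norm n (w - z) < r := hw
    have h2 : l1norm n (w - z') < r := hw'
    have h3 : α ≤ l1norm n (z - z') :=
      hdist z (Finset.mem_of_mem_filter _ hz) z'
        (Finset.mem_of_mem_filter _ hz') hzz'
    have h4 : l1norm n (z - z') ≤ l1norm n (z - w) + l1norm n (w - z') :=
      l1norm_triangle n z w z'
    rw [l1norm_sub_comm n z w] at h4
    have : l1norm n (z - z') < α := by
      calc l1norm n (z - z') ≤ l1norm n (w - z) + l1norm n (w - z') := h4
        _ < r + r := add_lt_add h1 h2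
        _ = α := by rw [hr]; ring
    linarith
  -- the balls are contained in the big ball around x
  have hsub : (⋃ z ∈ P, l1ball n z r) ⊆ l1ball n x (β + r) := by
    intro w hw
    simp only [Set.mem_iUnion] at hw
    obtain ⟨z, hzP, hwz⟩ := hw
    have h1 : l1norm n (w - z) < r := hwz
    have h2 : l1norm n (z - x) ≤ β := (Finset.mem_filter.1 hzP).2
    show l1norm n (w - x) < β + r
    calc l1norm n (w - x) ≤ l1norm n (w - z) + l1norm n (z - x) :=
          l1norm_triangle n w z x
      _ < r + β := add_lt_add_of_lt_of_le h1 h2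
      _ = β + r := add_comm _ _
  -- measure computation
  have hmeas : ∀ z ∈ P, MeasurableSet (l1ball n z r) :=
    fun z _ => (l1ball_isOpen n z r).measurableSet
  have hsum : volume (⋃ z ∈ P, l1ball n z r)
      = (P.card : ℝ≥0∞) * (ENNReal.ofReal (r ^ n) * V) := by
    rw [measure_biUnion_finset hdisj hmeas]
    rw [Finset.sum_congr rfl (fun z _ => l1ball_volume n z hrpos)]
    rw [Finset.sum_const, nsmul_eq_mul]
  have hle : (P.card : ℝ≥0∞) * (ENNReal.ofReal (r ^ n) * V)
      ≤ ENNReal.ofReal ((β + r) ^ n) * V := by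
    rw [← hsum, ← l1ball_volume n x (by positivity : (0:ℝ) < β + r)]
    exact measure_mono hsub
  have hle2 : (P.card : ℝ≥0∞) * ENNReal.ofReal (r ^ n)
      ≤ ENNReal.ofReal ((β + r) ^ n) := by
    rw [← ENNReal.mul_le_mul_iff_left (ne_of_gt hVpos) (ne_of_lt hVlt), mul_assoc]
    exact hle
  have hle3 : (P.card : ℝ) * r ^ n ≤ (β + r) ^ n := by
    have h1 : (P.card : ℝ≥0∞) = ENNReal.ofReal (P.card : ℝ) := by
      simp [ENNReal.ofReal_natCast]
    rw [h1, ← ENNReal.ofReal_mul (by positivity)] at hle2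
    exact (ENNReal.ofReal_le_ofReal_iff (by positivity)).1 hle2
  -- conclude
  have hPreal : ((b : ℝ) + 1) ≤ (P.card : ℝ) := by exact_mod_cast hPcard
  have hrn : (0:ℝ) < r ^ n := by positivity
  have hkey : ((b : ℝ) + 1) ≤ (2 * β / α + 1) ^ n := by
    have h2 : (2 * β / α + 1) = (β + r) / r := by
      rw [hr]; field_simp
    rw [h2, div_pow, le_div_iff₀ hrn]
    calc ((b : ℝ) + 1) * r ^ n ≤ (P.card : ℝ) * r ^ n := by
          exact mul_le_mul_of_nonneg_right hPreal hrn.le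
      _ ≤ (β + r) ^ n := hle3
  linarith
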